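/- Let X be a CAT(0) cube complex with no infinite family of pairwise-crossing hyperplanes. Then every maximal simplex of the simplicial boundary ∂X is visible; in particular, every isolated 0-simplex of ∂X is visible. -/

import Mathlib

/-!
Combinatorial model of a CAT(0) cube complex via Sageev duality.

`V` is the set of 0-cubes, `H` the set of hyperplanes, and `side h x : Bool`
records which halfspace of the hyperplane `h` contains the 0-cube `x`.
The axioms say exactly that `V` is the set of consistent orientations of the
hyperplanes, each differing from a fixed one on finitely many hyperplanes;
this is precisely the combinatorial data of (the 0-skeleton of) a CAT(0) cube
complex, together with its hyperplane structure.
-/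
structure CCC where
  V : Type
  H : Type
  side : H → V → Bool
  nonempty_V : Nonempty V
  vertex_ext : ∀ x y : V, (∀ h, side h x = side h y) → x = y
  sep_finite : ∀ x y : V, {h : H | side h x ≠ side h y}.Finite
  halfspace_nonempty : ∀ h b, ∃ x, side h x = b
  hyp_inj : ∀ h h' : H, (∀ x, side h x = side h' x) → h = h'
  hyp_inj' : ∀ h h' : H, (∀ x, side h x = !(side h' x)) → h = h'
  realize : ∀ (o : H → Bool) (x : V),
    (∀ h h', ∃ y, side h y = o h ∧ side h' y = o h') →
    {h : H | o h ≠ side h x}.Finite →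
    ∃ y, ∀ h, side h y = o h

namespace CCC

variable (X : CCC)

/-- The combinatorial (1-skeleton) distance between 0-cubes: the number of
separating hyperplanes. -/
noncomputable def dist (x y : X.V) : ℕ := (X.sep_finite x y).toFinset.card

/-- Two 0-cubes are adjacent (joined by a 1-cube) iff exactly one hyperplane
separates them. -/
def Adj (x y : X.V) : Prop :=
  ∃ h, X.side h x ≠ X.side h y ∧ ∀ h', X.side h' x ≠ X.side h' y → h' = h

/-- Two hyperplanes cross iff all four quarter-spaces are nonempty. -/
def Crosses (h h' : X.H) : Prop :=
  ∀ b b' : Bool, ∃ x, X.side h x = b ∧ X.side h' x = b'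

/-- The hyperplane `h'` lies in the halfspace `b` of the hyperplane `h`. -/
def InHalf (h' h : X.H) (b : Bool) : Prop :=
  h' ≠ h ∧ ∃ c : Bool, ∀ x, X.side h x = !b → X.side h' x = c

/-- `h` separates the hyperplanes `h₁` and `h₂`. -/
def SepH (h h₁ h₂ : X.H) : Prop :=
  ∃ b : Bool, X.InHalf h₁ h b ∧ X.InHalf h₂ h (!b)

/-- Two distinct hyperplanes contact iff no third hyperplane separates them. -/
def Contact (h h' : X.H) : Prop := h ≠ h' ∧ ¬ ∃ h'', X.SepH h'' h h'

/-- A facing triple: three distinct hyperplanes, each having a halfspace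
containing the other two. -/
def FacingTriple (h₁ h₂ h₃ : X.H) : Prop :=
  h₁ ≠ h₂ ∧ h₁ ≠ h₃ ∧ h₂ ≠ h₃ ∧
  ∃ b₁ b₂ b₃ : Bool,
    X.InHalf h₂ h₁ b₁ ∧ X.InHalf h₃ h₁ b₁ ∧
    X.InHalf h₁ h₂ b₂ ∧ X.InHalf h₃ h₂ b₂ ∧
    X.InHalf h₁ h₃ b₃ ∧ X.InHalf h₂ h₃ b₃

/-- A set of hyperplanes is inseparable if every hyperplane separating two of
its members belongs to it. -/
def Inseparable (U : Set X.H) : Prop :=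
  ∀ u ∈ U, ∀ u' ∈ U, ∀ h, X.SepH h u u' → h ∈ U

/-- A set of hyperplanes is unidirectional if each member has a halfspace
containing only finitely many members. -/
def Unidirectional (U : Set X.H) : Prop :=
  ∀ u ∈ U, ∃ b : Bool, {h | h ∈ U ∧ X.InHalf h u b}.Finite

def NoFacingTriple (U : Set X.H) : Prop :=
  ∀ h₁ ∈ U, ∀ h₂ ∈ U, ∀ h₃ ∈ U, ¬ X.FacingTriple h₁ h₂ h₃

/-- A unidirectional boundary set (UBS). -/
def IsUBS (U : Set X.H) : Prop :=
  U.Infinite ∧ X.Inseparable U ∧ X.Unidirectional U ∧ X.NoFacingTriple U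

/-- Almost-equivalence: finite symmetric difference. -/
def AlmostEq (U U' : Set X.H) : Prop := (symmDiff U U').Finite

/-- A minimal UBS. -/
def MinUBS (U : Set X.H) : Prop :=
  X.IsUBS U ∧ ∀ U' ⊆ U, X.IsUBS U' → X.AlmostEq U U'

/-- The simplex (= almost-equivalence class of UBSs) represented by `U` is a
face of the simplex represented by `V`. -/
def FaceOf (U V : Set X.H) : Prop :=
  ∃ U' V', X.IsUBS U' ∧ X.IsUBS V' ∧ X.AlmostEq U U' ∧ X.AlmostEq V V' ∧ U' ⊆ V'

/-- `U` decomposes, up to almost-equivalence, into `k` pairwise disjoint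
minimal UBSs; i.e. the class of `U` is a `(k-1)`-simplex of `∂X`. -/
def HasDim (U : Set X.H) (k : ℕ) : Prop :=
  ∃ 𝒰 : Fin k → Set X.H, (∀ i, X.MinUBS (𝒰 i)) ∧
    (∀ i j, i ≠ j → Disjoint (𝒰 i) (𝒰 j)) ∧ X.AlmostEq U (⋃ i, 𝒰 i)

/-- No infinite family of pairwise-crossing hyperplanes. -/
def NoInfiniteCrossing : Prop :=
  ∀ S : Set X.H, (∀ h ∈ S, ∀ h' ∈ S, h ≠ h' → X.Crosses h h') → S.Finite

def LocallyFinite : Prop := ∀ x : X.V, {y | X.Adj x y}.Finite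

/-- A combinatorial geodesic ray (parameterized by its vertices). -/
def IsGeodesicRay (γ : ℕ → X.V) : Prop :=
  ∀ m n : ℕ, m ≤ n → X.dist (γ m) (γ n) = n - m

/-- A bi-infinite combinatorial geodesic. -/
def IsGeodesicLine (α : ℤ → X.V) : Prop :=
  ∀ m n : ℤ, m ≤ n → (X.dist (α m) (α n) : ℤ) = n - m

/-- A combinatorial geodesic segment of length `n`. -/
def IsGeodSeg (c : ℕ → X.V) (n : ℕ) : Prop :=
  ∀ i j : ℕ, i ≤ j → j ≤ n → X.dist (c i) (c j) = j - i

/-- The set of hyperplanes crossing (dual to the 1-cubes of) the path `γ`. -/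
def WSet (γ : ℕ → X.V) : Set X.H :=
  {h | ∃ n : ℕ, X.side h (γ n) ≠ X.side h (γ (n+1))}

/-- The 0-cubes of the carrier `N(h)` of the hyperplane `h`. -/
def carrier (h : X.H) : Set X.V :=
  {x | ∃ y, X.Adj x y ∧ X.side h x ≠ X.side h y}

/-- An essential hyperplane: each halfspace contains 0-cubes arbitrarily far
from the carrier. -/
def EssentialHyp (h : X.H) : Prop :=
  ∀ b : Bool, ∀ n : ℕ, ∃ x, X.side h x = b ∧ ∀ y ∈ X.carrier h, n ≤ X.dist x y

/-- Combinatorial convexity of a set of 0-cubes (the 0-skeleton of a convex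
subcomplex). -/
def IsConvexSet (S : Set X.V) : Prop :=
  ∀ x ∈ S, ∀ y ∈ S, ∀ z, X.dist x z + X.dist z y = X.dist x y → z ∈ S

/-- `x` and `y` are joined by a combinatorial path avoiding `S`. -/
def ReachAvoid (S : Set X.V) (x y : X.V) : Prop :=
  ∃ (n : ℕ) (c : ℕ → X.V), c 0 = x ∧ c n = y ∧
    (∀ i < n, X.Adj (c i) (c (i+1))) ∧ ∀ i ≤ n, c i ∉ S

/-- No compact (finite) convex subcomplex disconnects `X`. -/
def CompactlyIndecomposable : Prop :=
  ∀ K : Set X.V, K.Finite → X.IsConvexSet K →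
    ∀ x y : X.V, x ∉ K → y ∉ K → X.ReachAvoid K x y

/-- `γ` bounds an eighth-flat: some eighth-flat (the subcomplex of the standard
tiling of `[0,∞)²` below the graph of an unbounded nondecreasing function)
embeds isometrically and cubically in `X` with image containing `γ`. -/
def BoundsEighthFlat (γ : ℕ → X.V) : Prop :=
  ∃ g : ℕ → ℕ, Monotone g ∧ (∀ N : ℕ, ∃ m, N ≤ g m) ∧
    ∃ e : {p : ℕ × ℕ // p.2 ≤ g p.1} → X.V,
      (∀ p q, X.dist (e p) (e q) = Nat.dist p.1.1 q.1.1 + Nat.dist p.1.2 q.1.2) ∧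
      ∀ n : ℕ, ∃ p, e p = γ n

/-- An edge-chain in the contact graph. -/
def CChain (c : ℕ → X.H) (n : ℕ) : Prop := ∀ i < n, X.Contact (c i) (c (i+1))

/-- Distance in the contact graph `C(X)` (`⊤` if there is no path). -/
noncomputable def cdist (h h' : X.H) : ℕ∞ :=
  sInf {e : ℕ∞ | ∃ (n : ℕ) (c : ℕ → X.H), c 0 = h ∧ c n = h' ∧ X.CChain c n ∧ e = n}

/-- An edge-chain in the crossing graph. -/
def XChain (c : ℕ → X.H) (n : ℕ) : Prop := ∀ i < n, X.Crosses (c i) (c (i+1))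

/-- Distance in the crossing graph `Δ(X)`. -/
noncomputable def xdist (h h' : X.H) : ℕ∞ :=
  sInf {e : ℕ∞ | ∃ (n : ℕ) (c : ℕ → X.H), c 0 = h ∧ c n = h' ∧ X.XChain c n ∧ e = n}

/-- Distance in the full subgraph `Λ(γ)` of the contact graph spanned by the
hyperplanes crossing `γ`. -/
noncomputable def ldist (γ : ℕ → X.V) (h h' : X.H) : ℕ∞ :=
  sInf {e : ℕ∞ | ∃ (n : ℕ) (c : ℕ → X.H), c 0 = h ∧ c n = h' ∧
    (∀ i ≤ n, c i ∈ X.WSet γ) ∧ X.CChain c n ∧ e = n}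

/-- Two 0-simplices of `∂X` (represented by minimal UBSs) are adjacent in the
1-skeleton of `∂X`. -/
def BAdj (U V : Set X.H) : Prop :=
  X.MinUBS U ∧ X.MinUBS V ∧ ¬ X.AlmostEq U V ∧
    ∃ W, X.IsUBS W ∧ X.FaceOf U W ∧ X.FaceOf V W

/-- Distance in the 1-skeleton of the simplicial boundary `∂X`, between the
0-simplices represented by the minimal UBSs `U` and `V`. -/
noncomputable def bdist (U V : Set X.H) : ℕ∞ :=
  sInf {e : ℕ∞ | ∃ (n : ℕ) (c : ℕ → Set X.H),
    X.AlmostEq (c 0) U ∧ X.AlmostEq (c n) V ∧ (∀ i ≤ n, X.MinUBS (c i)) ∧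
    (∀ i < n, X.BAdj (c i) (c (i+1)) ∨ X.AlmostEq (c i) (c (i+1))) ∧ e = n}

/-- Diameter of the contact graph. -/
noncomputable def cdiam : ℕ∞ := ⨆ (h : X.H) (h' : X.H), X.cdist h h'

/-- Diameter of the crossing graph. -/
noncomputable def xdiam : ℕ∞ := ⨆ (h : X.H) (h' : X.H), X.xdist h h'

/-- Diameter of the 1-skeleton of the simplicial boundary. -/
noncomputable def bdiam : ℕ∞ :=
  ⨆ (U : Set X.H) (V : Set X.H) (_ : X.MinUBS U) (_ : X.MinUBS V), X.bdist U V

/-- A consistent orientation of the hyperplanes: any two chosen halfspaces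
intersect. -/
def Consistent (χ : X.H → Bool) : Prop :=
  ∀ h h', ∃ x, X.side h x = χ h ∧ X.side h' x = χ h'

/-- The halfspace `b` of `h`, as a set of 0-cubes. -/
def Hs (h : X.H) (b : Bool) : Set X.V := {x | X.side h x = b}

/-- Every simplex of `∂X` is visible, i.e. represented by the set of
hyperplanes crossing some combinatorial geodesic ray. -/
def FullyVisible : Prop :=
  ∀ V, X.IsUBS V → ∃ γ : ℕ → X.V, X.IsGeodesicRay γ ∧ X.AlmostEq (X.WSet γ) V

/-- The halfspace `b` of `h` is shallow: it lies within uniformly bounded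
distance of the carrier of `h`. -/
def ShallowHalf (h : X.H) (b : Bool) : Prop :=
  ∃ R : ℕ, ∀ x, X.side h x = b → ∃ y ∈ X.carrier h, X.dist x y ≤ R

/-- An `r`-avoiding combinatorial path (with respect to the basepoint `x₀`)
of length `n` from `a` to `b`. -/
def AvoidPathLen (x₀ : X.V) (r : ℕ) (a b : X.V) (n : ℕ) : Prop :=
  ∃ c : ℕ → X.V, c 0 = a ∧ c n = b ∧
    (∀ i < n, X.Adj (c i) (c (i+1))) ∧ ∀ i ≤ n, r ≤ X.dist (c i) x₀

/-- Combinatorial geodesic completeness: for every (finite) maximal family of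
pairwise-crossing hyperplanes and every choice of halfspaces, the intersection
of the chosen halfspaces contains 0-cubes arbitrarily far from the
intersection of the carriers. -/
def CombGeodComplete : Prop :=
  ∀ (n : ℕ) (W : Fin n → X.H), Function.Injective W →
    (∀ i j, i ≠ j → X.Crosses (W i) (W j)) →
    (∀ h, ¬ ∀ i, X.Crosses h (W i)) →
    ∀ χ : Fin n → Bool, ∀ R : ℕ,
      ∃ x, (∀ i, X.side (W i) x = χ i) ∧
        ∀ y, (∀ i, y ∈ X.carrier (W i)) → R ≤ X.dist x y

/-- `X` decomposes as a product of two unbounded convex subcomplexes: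
equivalently, the hyperplanes split into two parts, each member of one part
crossing each member of the other, both factors being unbounded. -/
def ProductDecomp : Prop :=
  ∃ H₁ H₂ : Set X.H, Disjoint H₁ H₂ ∧ H₁ ∪ H₂ = Set.univ ∧
    (∀ h₁ ∈ H₁, ∀ h₂ ∈ H₂, X.Crosses h₁ h₂) ∧
    (∀ n : ℕ, ∃ x y : X.V, n ≤ ({h | X.side h x ≠ X.side h y} ∩ H₁).ncard) ∧
    (∀ n : ℕ, ∃ x y : X.V, n ≤ ({h | X.side h x ≠ X.side h y} ∩ H₂).ncard)

/-- `∂X` decomposes as the simplicial join of two disjoint nonempty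
subcomplexes: the 0-simplices split into two nonempty parts, any 0-simplex of
one part spanning a 1-simplex with any 0-simplex of the other. -/
def JoinDecomp : Prop :=
  ∃ 𝒜₁ 𝒜₂ : Set (Set X.H),
    (∀ U ∈ 𝒜₁, X.MinUBS U) ∧ (∀ U ∈ 𝒜₂, X.MinUBS U) ∧
    𝒜₁.Nonempty ∧ 𝒜₂.Nonempty ∧
    (∀ U U', U ∈ 𝒜₁ → X.MinUBS U' → X.AlmostEq U U' → U' ∈ 𝒜₁) ∧
    (∀ U U', U ∈ 𝒜₂ → X.MinUBS U' → X.AlmostEq U U' → U' ∈ 𝒜₂) ∧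
    (∀ U, X.MinUBS U → U ∈ 𝒜₁ ∨ U ∈ 𝒜₂) ∧
    (∀ U ∈ 𝒜₁, ∀ V ∈ 𝒜₂, ¬ X.AlmostEq U V) ∧
    (∀ U ∈ 𝒜₁, ∀ V ∈ 𝒜₂, ∃ W, X.IsUBS W ∧ X.FaceOf U W ∧ X.FaceOf V W)

/-! Relative versions of the hyperplane notions, for a (convex) subcomplex
with 0-cube set `S`; the hyperplanes of the subcomplex are the hyperplanes of
`X` crossing it. -/

/-- `h` crosses the subcomplex with 0-cubes `S`. -/
def CrossesSet (S : Set X.V) (h : X.H) : Prop :=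
  ∃ x ∈ S, ∃ y ∈ S, X.side h x ≠ X.side h y

def InHalfOn (S : Set X.V) (h' h : X.H) (b : Bool) : Prop :=
  h' ≠ h ∧ ∃ c : Bool, ∀ x ∈ S, X.side h x = !b → X.side h' x = c

def SepHOn (S : Set X.V) (h h₁ h₂ : X.H) : Prop :=
  X.CrossesSet S h ∧ ∃ b : Bool, X.InHalfOn S h₁ h b ∧ X.InHalfOn S h₂ h (!b)

def InseparableOn (S : Set X.V) (U : Set X.H) : Prop :=
  ∀ u ∈ U, ∀ u' ∈ U, ∀ h, X.SepHOn S h u u' → h ∈ U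

def UnidirectionalOn (S : Set X.V) (U : Set X.H) : Prop :=
  ∀ u ∈ U, ∃ b : Bool, {h | h ∈ U ∧ X.InHalfOn S h u b}.Finite

def NoFacingTripleOn (S : Set X.V) (U : Set X.H) : Prop :=
  ∀ h₁ ∈ U, ∀ h₂ ∈ U, ∀ h₃ ∈ U, ¬ (h₁ ≠ h₂ ∧ h₁ ≠ h₃ ∧ h₂ ≠ h₃ ∧
    ∃ b₁ b₂ b₃ : Bool,
      X.InHalfOn S h₂ h₁ b₁ ∧ X.InHalfOn S h₃ h₁ b₁ ∧
      X.InHalfOn S h₁ h₂ b₂ ∧ X.InHalfOn S h₃ h₂ b₂ ∧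
      X.InHalfOn S h₁ h₃ b₃ ∧ X.InHalfOn S h₂ h₃ b₃)

/-- A UBS of the subcomplex with 0-cube set `S`. -/
def IsUBSOn (S : Set X.V) (U : Set X.H) : Prop :=
  (∀ h ∈ U, X.CrossesSet S h) ∧ U.Infinite ∧ X.InseparableOn S U ∧
    X.UnidirectionalOn S U ∧ X.NoFacingTripleOn S U

def MinUBSOn (S : Set X.V) (U : Set X.H) : Prop :=
  X.IsUBSOn S U ∧ ∀ U' ⊆ U, X.IsUBSOn S U' → X.AlmostEq U U'

def FaceOfOn (S : Set X.V) (U V : Set X.H) : Prop :=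
  ∃ U' V', X.IsUBSOn S U' ∧ X.IsUBSOn S V' ∧ X.AlmostEq U U' ∧ X.AlmostEq V V' ∧ U' ⊆ V'

def HasDimOn (S : Set X.V) (U : Set X.H) (k : ℕ) : Prop :=
  ∃ 𝒰 : Fin k → Set X.H, (∀ i, X.MinUBSOn S (𝒰 i)) ∧
    (∀ i j, i ≠ j → Disjoint (𝒰 i) (𝒰 j)) ∧ X.AlmostEq U (⋃ i, 𝒰 i)

end CCC

/-!
Fix a vertex `x₀` and compare hyperplanes by inclusion of their halfspaces not containing `x₀`
(their far halfspaces). In a UBS `V`, Ramsey's theorem makes any infinite sequence nested after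
passing to a subsequence: three pairwise disjoint far halfspaces would form a facing triple, an
ascending chain would separate two vertices by infinitely many hyperplanes, and an infinite
family that pairwise meets without being nested would cross pairwise. Nested sequences `aₙ`, `bₙ`
in `V` with `far aₙ ∩ far bₙ = ∅` would put infinitely many members of `V` on either side of
`a₀`, so after deleting finitely many members the far halfspaces of `V` pairwise meet. The
hyperplanes separating `x₀` from these members form a UBS `T` containing almost all of `V`. Its
height levels are crossing families, hence finite, so enumerating `T` by height gives nested
consistent orientations, that is, a geodesic ray from `x₀` crossing exactly `T`. Maximality of
`V` makes `T \ V` finite.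
-/

open Filter in
/-- Ramsey's theorem for pairs. With a nonprincipal ultrafilter `U`, colour `i` by the colour of
`U`-almost all pairs `(i, j)`; a `U`-large colour class is then enumerated greedily. -/
theorem exists_subseq_forall_or_forall_not {α : Type*} (r : α → α → Prop) (f : ℕ → α) :
    ∃ g : ℕ ↪o ℕ, (∀ m n, m < n → r (f (g m)) (f (g n))) ∨
      ∀ m n, m < n → ¬ r (f (g m)) (f (g n)) := by
  let U : Filter ℕ := hyperfilter ℕ
  obtain ⟨p, hp⟩ : ∃ p : Prop, ∀ᶠ i in U, ∀ᶠ j in U, (r (f i) (f j) ↔ p) := by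
    by_cases h : ∀ᶠ i in U, ∀ᶠ j in U, r (f i) (f j)
    · exact ⟨True, h.mono fun i hi => hi.mono fun j hj => iff_true_intro hj⟩
    · rw [← Ultrafilter.eventually_not] at h
      exact ⟨False, h.mono fun i hi =>
        (Ultrafilter.eventually_not.2 hi).mono fun j hj => iff_false_intro hj⟩
  have hgt : ∀ i, ∀ᶠ j in U, i < j := fun i =>
    hyperfilter_le_cofinite (Nat.cofinite_eq_atTop ▸ eventually_gt_atTop i)
  obtain ⟨g, -, hg⟩ := exists_seq_of_forall_finset_exists
    (fun i => ∀ᶠ j in U, (r (f i) (f j) ↔ p)) (fun i j => i < j ∧ (r (f i) (f j) ↔ p))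
    fun s hs => (hp.and <| (eventually_all_finset s).2 fun i hi =>
      (hgt i).and (hs i hi)).exists
  refine ⟨OrderEmbedding.ofStrictMono g fun m n h => (hg m n h).1, ?_⟩
  by_cases hp' : p
  · exact Or.inl fun m n h => (hg m n h).2.2 hp'
  · exact Or.inr fun m n h hr => hp' ((hg m n h).2.1 hr)

theorem Set.Infinite.exists_seq_range_eq_of_finite_sublevels {α : Type*} {T : Set α}
    (hT : T.Infinite) (f : α → ℕ) (hf : ∀ k, {a | a ∈ T ∧ f a ≤ k}.Finite) :
    ∃ e : ℕ → α, Function.Injective e ∧ Set.range e = T ∧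
      ∀ m n, f (e m) < f (e n) → m < n := by
  classical
  let rest : Finset α → Set α := fun F => T \ F
  have hrest : ∀ F, (rest F).Nonempty := fun F => (hT.sdiff F.finite_toSet).nonempty
  let pick : Finset α → α := fun F => Function.argminOn f (rest F) (hrest F)
  let F : ℕ → Finset α := fun n => (fun F => insert (pick F) F)^[n] ∅
  let e : ℕ → α := fun n => pick (F n)
  have hF : ∀ n, F n = (Finset.range n).image e := by
    intro n
    induction n with
    | zero => rfl
    | succ n ih =>
      rw [Finset.range_add_one, Finset.image_insert, ← ih]
      exact Function.iterate_succ_apply' _ n ∅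
  have he_mem : ∀ n, e n ∈ rest (F n) := fun n => Function.argminOn_mem f _ _
  have he_min : ∀ n, ∀ a ∈ rest (F n), f (e n) ≤ f a := fun n _ ha =>
    Function.argminOn_le f _ ha
  have he_lt : ∀ m n, m < n → e m ∈ F n := fun m n h => by
    rw [hF]; exact Finset.mem_image_of_mem e (Finset.mem_range.2 h)
  have hinj : Function.Injective e := Function.Injective.of_lt_imp_ne fun m n h heq =>
    (he_mem n).2 (heq ▸ he_lt m n h)
  have hnot : ∀ m n, m ≤ n → e n ∉ F m := fun m n h hn => by
    rw [hF] at hn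
    obtain ⟨k, hk, hkn⟩ := Finset.mem_image.1 hn
    exact (hinj hkn ▸ Finset.mem_range.1 hk).not_ge h
  refine ⟨e, hinj, Set.Subset.antisymm (Set.range_subset_iff.2 fun n => (he_mem n).1) ?_, ?_⟩
  · intro a ha
    by_contra hae
    have hbelow : ∀ n, e n ∈ {b | b ∈ T ∧ f b ≤ f a} := fun n =>
      ⟨(he_mem n).1, he_min n a ⟨ha, fun haF => hae <| by
        rw [hF] at haF
        obtain ⟨k, -, rfl⟩ := Finset.mem_image.1 haF
        exact ⟨k, rfl⟩⟩⟩
    exact Set.infinite_of_injective_forall_mem hinj hbelow (hf (f a))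
  · intro m n hlt
    by_contra hnm
    exact hlt.not_ge (he_min n (e m) ⟨(he_mem m).1, hnot n m (not_lt.1 hnm)⟩)

namespace CCC

variable {X : CCC}

lemma dist_eq_ncard (x y : X.V) : X.dist x y = {h | X.side h x ≠ X.side h y}.ncard :=
  (Set.ncard_eq_toFinset_card _ _).symm

lemma crosses_symm {h h' : X.H} (hc : X.Crosses h h') : X.Crosses h' h := fun b b' =>
  let ⟨x, hx, hx'⟩ := hc b' b
  ⟨x, hx', hx⟩

lemma eq_of_halfspace_iff {h h' : X.H} {a a' : Bool}
    (H : ∀ z, X.side h z = a ↔ X.side h' z = a') : h = h' := by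
  by_cases hab : a = a'
  · subst hab
    exact X.hyp_inj _ _ fun z => by
      have := H z; revert this; cases a <;> cases X.side h z <;> cases X.side h' z <;> decide
  · exact X.hyp_inj' _ _ fun z => by
      have := H z; revert this hab
      cases a <;> cases a' <;> cases X.side h z <;> cases X.side h' z <;> decide

/-- `X.far x₀ h ⊆ X.far x₀ h'` says that `h'` is `h` or separates `x₀` from `h`. -/
def far (x₀ : X.V) (h : X.H) : Set X.V := {z | X.side h z ≠ X.side h x₀}

@[simp] lemma mem_far {x₀ z : X.V} {h : X.H} : z ∈ X.far x₀ h ↔ X.side h z ≠ X.side h x₀ :=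
  Iff.rfl

lemma far_nonempty (x₀ : X.V) (h : X.H) : (X.far x₀ h).Nonempty :=
  let ⟨z, hz⟩ := X.halfspace_nonempty h (!X.side h x₀)
  ⟨z, by simp [hz]⟩

lemma finite_far_supset (x₀ : X.V) (h : X.H) : {h' | X.far x₀ h ⊆ X.far x₀ h'}.Finite :=
  let ⟨y, hy⟩ := far_nonempty x₀ h
  (X.sep_finite y x₀).subset fun _ hh' => hh' hy

lemma side_ne_side_iff (x₀ : X.V) (h : X.H) (z z' : X.V) :
    X.side h z ≠ X.side h z' ↔ ¬ (z ∈ X.far x₀ h ↔ z' ∈ X.far x₀ h) := by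
  simp only [mem_far]
  cases X.side h z <;> cases X.side h z' <;> cases X.side h x₀ <;> decide

section Far

variable {x₀ : X.V} {h h' : X.H}

lemma eq_of_far_eq (hf : X.far x₀ h = X.far x₀ h') : h = h' :=
  eq_of_halfspace_iff (a := !X.side h x₀) (a' := !X.side h' x₀) fun z => by
    simpa [Bool.eq_not_iff] using Set.ext_iff.1 hf z

lemma ne_of_disjoint_far (hd : Disjoint (X.far x₀ h) (X.far x₀ h')) : h ≠ h' := by
  rintro rfl
  exact (far_nonempty x₀ h).ne_empty (disjoint_self.1 hd)

lemma inHalf_of_far_subset (hne : h' ≠ h) (hsub : X.far x₀ h' ⊆ X.far x₀ h) :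
    X.InHalf h' h (!X.side h x₀) :=
  ⟨hne, X.side h' x₀, fun z hz => by
    by_contra hc
    exact hsub hc (by simpa using hz)⟩

lemma inHalf_of_disjoint_far (hne : h' ≠ h) (hd : Disjoint (X.far x₀ h') (X.far x₀ h)) :
    X.InHalf h' h (X.side h x₀) :=
  ⟨hne, X.side h' x₀, fun z hz => by
    by_contra hc
    exact Set.disjoint_left.1 hd hc (by simp [hz])⟩

lemma far_subset_of_inHalf {b : Bool} (hi : X.InHalf h' h b) (hx : X.side h x₀ = !b) :
    X.far x₀ h' ⊆ X.far x₀ h := by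
  obtain ⟨-, c, hc⟩ := hi
  intro z hz heq
  exact hz ((hc z (heq.trans hx)).trans (hc x₀ hx).symm)

lemma disjoint_or_far_subset_of_inHalf {b : Bool} (hi : X.InHalf h' h b)
    (hx : X.side h x₀ = b) :
    Disjoint (X.far x₀ h') (X.far x₀ h) ∨ X.far x₀ h ⊆ X.far x₀ h' := by
  obtain ⟨-, c, hc⟩ := hi
  have hfar : ∀ z ∈ X.far x₀ h, X.side h' z = c := fun z hz =>
    hc z (hx ▸ Bool.eq_not_iff.2 hz)
  by_cases hc0 : c = X.side h' x₀
  · exact Or.inl (Set.disjoint_right.2 fun z hz hz' => hz' ((hfar z hz).trans hc0))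
  · exact Or.inr fun z hz => (hfar z hz).trans_ne hc0

lemma facingTriple_of_disjoint_far {h₁ h₂ h₃ : X.H}
    (d₁₂ : Disjoint (X.far x₀ h₁) (X.far x₀ h₂)) (d₁₃ : Disjoint (X.far x₀ h₁) (X.far x₀ h₃))
    (d₂₃ : Disjoint (X.far x₀ h₂) (X.far x₀ h₃)) : X.FacingTriple h₁ h₂ h₃ :=
  ⟨ne_of_disjoint_far d₁₂, ne_of_disjoint_far d₁₃, ne_of_disjoint_far d₂₃,
    X.side h₁ x₀, X.side h₂ x₀, X.side h₃ x₀,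
    inHalf_of_disjoint_far (ne_of_disjoint_far d₁₂).symm d₁₂.symm,
    inHalf_of_disjoint_far (ne_of_disjoint_far d₁₃).symm d₁₃.symm,
    inHalf_of_disjoint_far (ne_of_disjoint_far d₁₂) d₁₂,
    inHalf_of_disjoint_far (ne_of_disjoint_far d₂₃).symm d₂₃.symm,
    inHalf_of_disjoint_far (ne_of_disjoint_far d₁₃) d₁₃,
    inHalf_of_disjoint_far (ne_of_disjoint_far d₂₃) d₂₃⟩

lemma crosses_of_far {h h' : X.H} (hi : (X.far x₀ h ∩ X.far x₀ h').Nonempty)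
    (h₁ : ¬ X.far x₀ h ⊆ X.far x₀ h') (h₂ : ¬ X.far x₀ h' ⊆ X.far x₀ h) : X.Crosses h h' := by
  have onFar : ∀ {k v c}, v ∈ X.far x₀ k → c ≠ X.side k x₀ → X.side k v = c := fun hv hc =>
    (Bool.eq_not_iff.2 hv).trans (Bool.eq_not_iff.2 hc).symm
  have onNear : ∀ {k v c}, v ∉ X.far x₀ k → c = X.side k x₀ → X.side k v = c := fun hv hc =>
    (not_not.1 hv).trans hc.symm
  obtain ⟨y, hy, hy'⟩ := hi
  obtain ⟨z, hz, hz'⟩ := Set.not_subset.1 h₁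
  obtain ⟨w, hw', hw⟩ := Set.not_subset.1 h₂
  intro b b'
  by_cases hb : b = X.side h x₀ <;> by_cases hb' : b' = X.side h' x₀
  · exact ⟨x₀, hb.symm, hb'.symm⟩
  · exact ⟨w, onNear hw hb, onFar hw' hb'⟩
  · exact ⟨z, onFar hz hb, onNear hz' hb'⟩
  · exact ⟨y, onFar hy hb, onFar hy' hb'⟩

end Far

def FarMeeting (x₀ : X.V) (T : Set X.H) : Prop :=
  ∀ h ∈ T, ∀ h' ∈ T, (X.far x₀ h ∩ X.far x₀ h').Nonempty

def FarUpperSet (x₀ : X.V) (T : Set X.H) : Prop :=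
  ∀ h ∈ T, ∀ h', X.far x₀ h ⊆ X.far x₀ h' → h' ∈ T

def farClosure (x₀ : X.V) (V : Set X.H) : Set X.H := {h | ∃ v ∈ V, X.far x₀ v ⊆ X.far x₀ h}

section FarMeeting

variable {x₀ : X.V} {V T : Set X.H}

lemma subset_farClosure : V ⊆ X.farClosure x₀ V := fun v hv => ⟨v, hv, subset_rfl⟩

lemma farUpperSet_farClosure : X.FarUpperSet x₀ (X.farClosure x₀ V) :=
  fun _ ⟨v, hv, hvh⟩ _ hsub => ⟨v, hv, hvh.trans hsub⟩

lemma FarMeeting.farClosure (hV : X.FarMeeting x₀ V) : X.FarMeeting x₀ (X.farClosure x₀ V) :=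
  fun _ ⟨v, hv, hvh⟩ _ ⟨v', hv', hvh'⟩ => (hV v hv v' hv').mono (Set.inter_subset_inter hvh hvh')

lemma FarUpperSet.inseparable (hT : X.FarUpperSet x₀ T) : X.Inseparable T := by
  rintro u hu u' hu' h ⟨b, hub, hu'b⟩
  by_cases hx : X.side h x₀ = b
  · exact hT u' hu' h (far_subset_of_inHalf hu'b (by rw [hx, Bool.not_not]))
  · exact hT u hu h (far_subset_of_inHalf hub (Bool.eq_not_iff.2 hx))

lemma FarMeeting.far_subset_of_inHalf_near (hT : X.FarMeeting x₀ T) {h h' : X.H} (hh : h ∈ T)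
    (hh' : h' ∈ T) (hi : X.InHalf h' h (X.side h x₀)) : X.far x₀ h ⊆ X.far x₀ h' :=
  (disjoint_or_far_subset_of_inHalf hi rfl).resolve_left
    (Set.not_disjoint_iff_nonempty_inter.2 (hT h' hh' h hh))

lemma FarMeeting.unidirectional (hT : X.FarMeeting x₀ T) : X.Unidirectional T :=
  fun u hu => ⟨X.side u x₀, (finite_far_supset x₀ u).subset fun _ ⟨hh, hi⟩ =>
    hT.far_subset_of_inHalf_near hu hh hi⟩

/-- Each member of a facing triple in `T` lies below both others or above both others, so two
of them are comparable both ways. -/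
lemma FarMeeting.noFacingTriple (hT : X.FarMeeting x₀ T) : X.NoFacingTriple T := by
  rintro h₁ m₁ h₂ m₂ h₃ m₃ ⟨n₁₂, n₁₃, n₂₃, b₁, b₂, b₃, i₂₁, i₃₁, i₁₂, i₃₂, i₁₃, i₂₃⟩
  have key : ∀ {h h' h''}, h ∈ T → h' ∈ T → h'' ∈ T → ∀ {b}, X.InHalf h' h b →
      X.InHalf h'' h b → (X.far x₀ h' ⊆ X.far x₀ h ∧ X.far x₀ h'' ⊆ X.far x₀ h) ∨
        (X.far x₀ h ⊆ X.far x₀ h' ∧ X.far x₀ h ⊆ X.far x₀ h'') := by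
    intro h h' h'' m m' m'' b i' i''
    by_cases hx : X.side h x₀ = b
    · subst hx
      exact Or.inr ⟨hT.far_subset_of_inHalf_near m m' i', hT.far_subset_of_inHalf_near m m'' i''⟩
    · have hx := Bool.eq_not_iff.2 hx
      exact Or.inl ⟨far_subset_of_inHalf i' hx, far_subset_of_inHalf i'' hx⟩
  have e : ∀ {h h' : X.H}, X.far x₀ h ⊆ X.far x₀ h' → X.far x₀ h' ⊆ X.far x₀ h → h = h' :=
    fun hs hs' => eq_of_far_eq (hs.antisymm hs')
  rcases key m₁ m₂ m₃ i₂₁ i₃₁ with ⟨_, _⟩ | ⟨_, _⟩ <;>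
    rcases key m₂ m₁ m₃ i₁₂ i₃₂ with ⟨_, _⟩ | ⟨_, _⟩ <;>
    rcases key m₃ m₁ m₂ i₁₃ i₂₃ with ⟨_, _⟩ | ⟨_, _⟩ <;>
    first
    | exact n₁₂ (e ‹_› ‹_›)
    | exact n₁₃ (e ‹_› ‹_›)
    | exact n₂₃ (e ‹_› ‹_›)

lemma isUBS_of_farMeeting_of_farUpperSet (hinf : T.Infinite) (hT : X.FarMeeting x₀ T)
    (hT' : X.FarUpperSet x₀ T) : X.IsUBS T :=
  ⟨hinf, hT'.inseparable, hT.unidirectional, hT.noFacingTriple⟩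

end FarMeeting

section Subsequences

variable {V : Set X.H}

lemma IsUBS.exists_far_antitone_subseq (hX : X.NoInfiniteCrossing) (hV : X.IsUBS V)
    (x₀ : X.V) {c : ℕ → X.H} (hc : Function.Injective c) (hcV : ∀ n, c n ∈ V) :
    ∃ g : ℕ → ℕ, StrictMono g ∧ ∀ m n, m < n → X.far x₀ (c (g n)) ⊆ X.far x₀ (c (g m)) := by
  obtain ⟨g₁, hdisj | hmeet⟩ :=
    exists_subseq_forall_or_forall_not (fun h h' => Disjoint (X.far x₀ h) (X.far x₀ h')) c
  · exact (hV.2.2.2 _ (hcV _) _ (hcV _) _ (hcV _) (facingTriple_of_disjoint_far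
      (hdisj 0 1 zero_lt_one) (hdisj 0 2 zero_lt_two) (hdisj 1 2 one_lt_two))).elim
  obtain ⟨g₂, hdec | hndec⟩ :=
    exists_increasing_or_nonincreasing_subseq (· ⊇ ·) fun n => X.far x₀ (c (g₁ n))
  · exact ⟨g₁ ∘ g₂, g₁.strictMono.comp g₂.strictMono, hdec⟩
  obtain ⟨g₃, h₃⟩ :=
    exists_increasing_or_nonincreasing_subseq (· ⊆ ·) fun n => X.far x₀ (c (g₁ (g₂ n)))
  set d : ℕ → X.H := fun n => c (g₁ (g₂ (g₃ n)))
  have hd : Function.Injective d :=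
    hc.comp (g₁.injective.comp (g₂.injective.comp g₃.injective))
  exfalso
  rcases h₃ with hinc | hninc
  · exact Set.infinite_of_injective_forall_mem (hd.comp Nat.succ_injective)
      (fun n => hinc 0 (n + 1) n.succ_pos) (finite_far_supset x₀ (d 0))
  · have hcross : ∀ m n, m < n → X.Crosses (d m) (d n) := fun m n h =>
      crosses_of_far (Set.not_disjoint_iff_nonempty_inter.1
        (hmeet _ _ (g₂.strictMono (g₃.strictMono h)))) (hninc m n h) (hndec _ _ (g₃.strictMono h))
    refine Set.infinite_range_of_injective hd (hX _ ?_)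
    rintro _ ⟨m, rfl⟩ _ ⟨n, rfl⟩ hne
    rcases lt_or_gt_of_ne (hne ∘ congrArg d) with h | h
    · exact hcross m n h
    · exact crosses_symm (hcross n m h)

lemma IsUBS.not_far_disjoint_matching (hX : X.NoInfiniteCrossing) (hV : X.IsUBS V)
    (x₀ : X.V) {a b : ℕ → X.H} (ha : Function.Injective a) (hb : Function.Injective b)
    (haV : ∀ n, a n ∈ V) (hbV : ∀ n, b n ∈ V)
    (hab : ∀ n, Disjoint (X.far x₀ (a n)) (X.far x₀ (b n))) : False := by
  obtain ⟨g, hg, hga⟩ := hV.exists_far_antitone_subseq hX x₀ ha haV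
  obtain ⟨g', hg', hgb⟩ := hV.exists_far_antitone_subseq hX x₀ (hb.comp hg.injective) fun _ => hbV _
  set u := a (g (g' 0))
  have hb_near : ∀ n, Disjoint (X.far x₀ (b (g (g' n)))) (X.far x₀ u) := fun n =>
    (hab _).symm.mono_left <| n.eq_zero_or_pos.elim (fun h => h ▸ subset_rfl) (hgb 0 n)
  have hfar : {h | h ∈ V ∧ X.InHalf h u (!X.side u x₀)}.Infinite :=
    Set.infinite_of_injective_forall_mem (f := fun n => a (g (g' (n + 1))))
      (ha.comp (hg.injective.comp (hg'.injective.comp Nat.succ_injective))) fun n =>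
        ⟨haV _, inHalf_of_far_subset (fun h => n.succ_ne_zero (hg'.injective (hg.injective (ha h))))
          (hga _ _ (hg' n.succ_pos))⟩
  have hnear : {h | h ∈ V ∧ X.InHalf h u (X.side u x₀)}.Infinite :=
    Set.infinite_of_injective_forall_mem (f := fun n => b (g (g' n)))
      (hb.comp (hg.injective.comp hg'.injective)) fun n =>
        ⟨hbV _, inHalf_of_disjoint_far (ne_of_disjoint_far (hb_near n)) (hb_near n)⟩
  obtain ⟨c, hc⟩ := hV.2.2.1 u (haV _)
  by_cases hcu : c = X.side u x₀
  · exact hnear (hcu ▸ hc)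
  · exact hfar (Bool.eq_not_iff.2 hcu ▸ hc)

lemma IsUBS.exists_finite_farMeeting_sdiff (hX : X.NoInfiniteCrossing) (hV : X.IsUBS V)
    (x₀ : X.V) : ∃ S : Set X.H, S.Finite ∧ X.FarMeeting x₀ (V \ S) := by
  classical
  by_contra! hcon
  simp only [FarMeeting, not_forall, Set.not_nonempty_iff_eq_empty] at hcon
  obtain ⟨p, hpV, hp⟩ := exists_seq_of_forall_finset_exists
    (fun p : X.H × X.H => p.1 ∈ V ∧ p.2 ∈ V ∧ Disjoint (X.far x₀ p.1) (X.far x₀ p.2))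
    (fun p q => q.1 ≠ p.1 ∧ q.2 ≠ p.2) fun s _ => by
      obtain ⟨v, hv, v', hv', hd⟩ :=
        hcon ↑(s.image Prod.fst ∪ s.image Prod.snd) (Finset.finite_toSet _)
      refine ⟨(v, v'), ⟨hv.1, hv'.1, Set.disjoint_iff_inter_eq_empty.2 hd⟩, fun q hq => ⟨?_, ?_⟩⟩
      · rintro rfl
        exact hv.2 (Finset.mem_coe.2 (Finset.mem_union_left _ (Finset.mem_image_of_mem _ hq)))
      · rintro rfl
        exact hv'.2 (Finset.mem_coe.2 (Finset.mem_union_right _ (Finset.mem_image_of_mem _ hq)))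
  exact hV.not_far_disjoint_matching hX x₀
    (Function.Injective.of_lt_imp_ne fun m n h => (hp m n h).1.symm)
    (Function.Injective.of_lt_imp_ne fun m n h => (hp m n h).2.symm)
    (fun n => (hpV n).1) (fun n => (hpV n).2.1) fun n => (hpV n).2.2

end Subsequences

noncomputable def height (x₀ : X.V) (h : X.H) : ℕ := {h' | X.far x₀ h ⊆ X.far x₀ h'}.ncard

section Rays

variable {x₀ : X.V}

lemma height_lt_height {h h' : X.H} (hsub : X.far x₀ h ⊆ X.far x₀ h') (hne : h ≠ h') :
    X.height x₀ h' < X.height x₀ h :=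
  Set.ncard_lt_ncard ⟨fun _ hk => hsub.trans hk,
    fun hss => hne (eq_of_far_eq (hsub.antisymm (hss (subset_refl (X.far x₀ h)))))⟩
    (finite_far_supset x₀ h)

/-- Hyperplanes of equal height are incomparable, so in a `FarMeeting` set they cross. -/
lemma FarMeeting.finite_height_le (hX : X.NoInfiniteCrossing) {T : Set X.H}
    (hT : X.FarMeeting x₀ T) (k : ℕ) : {h | h ∈ T ∧ X.height x₀ h ≤ k}.Finite := by
  have hlevel : ∀ j, {h | h ∈ T ∧ X.height x₀ h = j}.Finite := fun j =>
    hX _ fun h ⟨hh, hj⟩ h' ⟨hh', hj'⟩ hne => crosses_of_far (hT h hh h' hh')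
      (fun hs => (height_lt_height hs hne).ne (hj'.trans hj.symm))
      (fun hs => (height_lt_height hs hne.symm).ne (hj.trans hj'.symm))
  exact ((Set.finite_Iic k).biUnion fun j _ => hlevel j).subset fun h ⟨hh, hk⟩ =>
    Set.mem_biUnion (Set.mem_Iic.2 hk) ⟨hh, rfl⟩

lemma exists_far_iff_mem {S : Set X.H} (hS : S.Finite) (hup : X.FarUpperSet x₀ S)
    (hmeet : X.FarMeeting x₀ S) : ∃ z, ∀ h, z ∈ X.far x₀ h ↔ h ∈ S := by
  classical
  have separate : ∀ h ∈ S, ∀ h' ∉ S, ∃ y, X.side h y = !X.side h x₀ ∧ X.side h' y = X.side h' x₀ :=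
    fun h hh h' hh' =>
      let ⟨y, hy, hy'⟩ := Set.not_subset.1 fun hs => hh' (hup h hh h' hs)
      ⟨y, Bool.eq_not_iff.2 hy, not_not.1 hy'⟩
  obtain ⟨z, hz⟩ := X.realize (fun h => if h ∈ S then !X.side h x₀ else X.side h x₀) x₀
    (fun h h' => by
      by_cases hh : h ∈ S <;> by_cases hh' : h' ∈ S <;> simp only [hh, hh', if_true, if_false]
      · obtain ⟨y, hy, hy'⟩ := hmeet h hh h' hh'
        exact ⟨y, Bool.eq_not_iff.2 hy, Bool.eq_not_iff.2 hy'⟩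
      · exact separate h hh h' hh'
      · exact (separate h' hh' h hh).imp fun _ => And.symm
      · exact ⟨x₀, rfl, rfl⟩)
    (hS.subset fun h hh => by by_contra hn; simp [hn] at hh)
  exact ⟨z, fun h => by by_cases hh : h ∈ S <;> simp [hz, hh]⟩

lemma isGeodesicRay_and_wSet_eq_of_far_iff {e : ℕ → X.H} (he : Function.Injective e) {z : ℕ → X.V}
    (hz : ∀ n h, z n ∈ X.far x₀ h ↔ h ∈ e '' Set.Iio n) :
    X.IsGeodesicRay z ∧ X.WSet z = Set.range e := by
  have hsep : ∀ m n, m ≤ n → {h | X.side h (z m) ≠ X.side h (z n)} = e '' Set.Ico m n := by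
    intro m n hmn
    ext h
    simp only [Set.mem_ofPred_eq, side_ne_side_iff x₀, hz]
    by_cases hr : h ∈ Set.range e
    · obtain ⟨k, rfl⟩ := hr
      simp only [he.mem_set_image, Set.mem_Iio, Set.mem_Ico]
      omega
    · simp only [Set.mem_range, not_exists] at hr
      simp [hr]
  refine ⟨fun m n hmn => by
    rw [dist_eq_ncard, hsep m n hmn, Set.ncard_image_of_injective _ he, Set.ncard_Ico_nat], ?_⟩
  ext h
  have hstep : ∀ n, X.side h (z n) ≠ X.side h (z (n + 1)) ↔ e n = h := fun n => by
    rw [← Set.mem_ofPred_eq (p := fun h => X.side h (z n) ≠ X.side h (z (n + 1))),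
      hsep n (n + 1) n.le_succ]
    constructor
    · rintro ⟨k, ⟨hk, hk'⟩, rfl⟩
      rw [le_antisymm (Nat.lt_succ_iff.1 hk') hk]
    · rintro rfl
      exact ⟨n, ⟨le_rfl, n.lt_succ_self⟩, rfl⟩
  exact exists_congr hstep

theorem exists_isGeodesicRay_wSet_eq (hX : X.NoInfiniteCrossing) {T : Set X.H}
    (hinf : T.Infinite) (hT : X.FarMeeting x₀ T) (hT' : X.FarUpperSet x₀ T) :
    ∃ γ, X.IsGeodesicRay γ ∧ X.WSet γ = T := by
  obtain ⟨e, he, hrange, hord⟩ :=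
    hinf.exists_seq_range_eq_of_finite_sublevels (X.height x₀) (hT.finite_height_le hX)
  have hmem : ∀ n, e n ∈ T := fun n => hrange ▸ Set.mem_range_self n
  have hz : ∀ n, ∃ z, ∀ h, z ∈ X.far x₀ h ↔ h ∈ e '' Set.Iio n := fun n =>
    exists_far_iff_mem ((Set.finite_Iio n).image e)
      (by
        rintro _ ⟨m, hm, rfl⟩ h' hsub
        obtain ⟨k, rfl⟩ : h' ∈ Set.range e := hrange ▸ hT' _ (hmem m) h' hsub
        rcases eq_or_ne k m with rfl | hkm
        · exact ⟨k, hm, rfl⟩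
        · exact ⟨k, (hord _ _ (height_lt_height hsub (he.ne hkm.symm))).trans hm, rfl⟩)
      fun _ ⟨m, _, hm⟩ _ ⟨k, _, hk⟩ => hm ▸ hk ▸ hT _ (hmem m) _ (hmem k)
  choose z hz using hz
  obtain ⟨hray, hW⟩ := isGeodesicRay_and_wSet_eq_of_far_iff he hz
  exact ⟨z, hray, hW.trans hrange⟩

end Rays

section Faces

variable {U W : Set X.H}

lemma almostEq_iff : X.AlmostEq U W ↔ (U \ W).Finite ∧ (W \ U).Finite := by
  rw [AlmostEq, Set.symmDiff_def, Set.finite_union]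

lemma IsUBS.inter (hU : X.IsUBS U) (hW : X.IsUBS W) (hinf : (U ∩ W).Infinite) :
    X.IsUBS (U ∩ W) :=
  ⟨hinf, fun u hu u' hu' h hs => ⟨hU.2.1 u hu.1 u' hu'.1 h hs, hW.2.1 u hu.2 u' hu'.2 h hs⟩,
    fun u hu => (hU.2.2.1 u hu.1).imp fun _ hfin => hfin.subset fun _ hh => ⟨hh.1.1, hh.2⟩,
    fun a ha b hb c hc => hU.2.2.2 a ha.1 b hb.1 c hc.1⟩

lemma FaceOf.diff_finite (h : X.FaceOf U W) : (U \ W).Finite := by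
  obtain ⟨U', W', -, -, hU, hW, hsub⟩ := h
  refine (hU.union hW).subset fun h ⟨hhU, hhW⟩ => ?_
  by_cases hh : h ∈ U'
  · exact Or.inr (Set.mem_symmDiff.2 (Or.inr ⟨hsub hh, hhW⟩))
  · exact Or.inl (Set.mem_symmDiff.2 (Or.inl ⟨hhU, hh⟩))

lemma faceOf_iff_diff_finite (hU : X.IsUBS U) (hW : X.IsUBS W) :
    X.FaceOf U W ↔ (U \ W).Finite := by
  refine ⟨FaceOf.diff_finite, fun h => ⟨U ∩ W, W, ?_, hW, ?_, almostEq_iff.2 (by simp),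
    Set.inter_subset_right⟩⟩
  · exact hU.inter hW (Set.sdiff_sdiff_right_self U W ▸ hU.1.sdiff h)
  · rw [almostEq_iff, Set.sdiff_self_inter, Set.sdiff_eq_empty.2 Set.inter_subset_left]
    exact ⟨h, Set.finite_empty⟩

end Faces

theorem IsUBS.visible_of_maximal (hX : X.NoInfiniteCrossing) {V : Set X.H} (hV : X.IsUBS V)
    (hmax : ∀ W, X.IsUBS W → X.FaceOf V W → X.FaceOf W V) :
    ∃ γ : ℕ → X.V, X.IsGeodesicRay γ ∧ X.AlmostEq (X.WSet γ) V := by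
  obtain ⟨x₀⟩ := X.nonempty_V
  obtain ⟨S, hS, hmeet⟩ := hV.exists_finite_farMeeting_sdiff hX x₀
  set T := X.farClosure x₀ (V \ S)
  have hTinf : T.Infinite := (hV.1.sdiff hS).mono subset_farClosure
  have hT : X.IsUBS T :=
    isUBS_of_farMeeting_of_farUpperSet hTinf hmeet.farClosure farUpperSet_farClosure
  obtain ⟨γ, hγ, hγT⟩ :=
    exists_isGeodesicRay_wSet_eq hX hTinf hmeet.farClosure farUpperSet_farClosure
  have hVT : (V \ T).Finite :=
    hS.subset fun v ⟨hv, hvT⟩ => by_contra fun hvS => hvT (subset_farClosure ⟨hv, hvS⟩)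
  have hTV : (T \ V).Finite := (hmax T hT ((faceOf_iff_diff_finite hV hT).2 hVT)).diff_finite
  exact ⟨γ, hγ, hγT ▸ almostEq_iff.2 ⟨hTV, hVT⟩⟩

end CCC

/-- Theorem 4.13 (visibility of maximal simplices).  In a CAT(0) cube complex
with no infinite family of pairwise-crossing hyperplanes, every maximal
simplex of `∂X` is visible; in particular every isolated 0-simplex is
visible. -/
theorem maximal_simplex_visible (X : CCC) (hX : X.NoInfiniteCrossing) :
    (∀ V : Set X.H, X.IsUBS V →
      (∀ W, X.IsUBS W → X.FaceOf V W → X.FaceOf W V) →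
      ∃ γ : ℕ → X.V, X.IsGeodesicRay γ ∧ X.AlmostEq (X.WSet γ) V) ∧
    (∀ V : Set X.H, X.MinUBS V →
      (∀ W, X.IsUBS W → X.FaceOf V W → X.AlmostEq V W) →
      ∃ γ : ℕ → X.V, X.IsGeodesicRay γ ∧ X.AlmostEq (X.WSet γ) V) :=
  ⟨fun _ hV hmax => hV.visible_of_maximal hX hmax,
    fun _ hV hiso => hV.1.visible_of_maximal hX fun W hW hVW =>
      (CCC.faceOf_iff_diff_finite hW hV.1).2 (CCC.almostEq_iff.1 (hiso W hW hVW)).2⟩
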